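/- arXiv:1409.0226 — 4 statements merged into one kernel-verified Lean document; each statement's English description precedes it below -/
import Mathlib

section
/- The function φ_even(x) = 1 - sin x · log((1+sin x)/cos x) satisfies the alternative identity φ_even(x) = 1 + sin x · log((1-sin x)/cos x) for all x ∈ (-π/2, π/2), is an even function of x, and is strictly decreasing on [0, π/2); consequently it has a unique root x_root in (0, π/2). -/
open Real Set

/-- φ_even(x) = 1 - sin x · log((1+sin x)/cos x). -/
noncomputable def phiEven (x : ℝ) : ℝ := 1 - sin x * log ((1 + sin x) / cos x)

lemma phiEven_alt {x : ℝ} (hx : x ∈ Ioo (-(π/2)) (π/2)) :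
    phiEven x = 1 + sin x * log ((1 - sin x) / cos x) := by
  have hc : 0 < cos x := Real.cos_pos_of_mem_Ioo hx
  have hsq : sin x ^ 2 + cos x ^ 2 = 1 := Real.sin_sq_add_cos_sq x
  have hs1 : sin x < 1 := by nlinarith
  have hs2 : -1 < sin x := by nlinarith
  have ha : (0:ℝ) < (1 - sin x) / cos x := div_pos (by linarith) hc
  have hb : (0:ℝ) < (1 + sin x) / cos x := div_pos (by linarith) hc
  have hmul : (1 - sin x) / cos x * ((1 + sin x) / cos x) = 1 := by
    field_simp; nlinarith
  have hlog : log ((1 - sin x) / cos x) + log ((1 + sin x) / cos x) = 0 := by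
    rw [← Real.log_mul ha.ne' hb.ne', hmul, Real.log_one]
  unfold phiEven
  nlinarith [hlog]

lemma phiEven_anti : StrictAntiOn phiEven (Ico 0 (π/2)) := by
  intro x hx y hy hxy
  obtain ⟨hx0, hx2⟩ := hx
  obtain ⟨hy0, hy2⟩ := hy
  have hcx : 0 < cos x := Real.cos_pos_of_mem_Ioo ⟨by linarith [Real.pi_pos], hx2⟩
  have hcy : 0 < cos y := Real.cos_pos_of_mem_Ioo ⟨by linarith [Real.pi_pos], hy2⟩
  have hy0' : 0 < y := lt_of_le_of_lt hx0 hxy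
  have hsx0 : 0 ≤ sin x := Real.sin_nonneg_of_nonneg_of_le_pi hx0 (by linarith [Real.pi_pos])
  have hsxy : sin x < sin y := by
    apply Real.strictMonoOn_sin ⟨by linarith, by linarith⟩ ⟨by linarith, le_of_lt hy2⟩ hxy
  have hsy0 : 0 < sin y := lt_of_le_of_lt hsx0 hsxy
  have hcyx : cos y < cos x := by
    apply Real.strictAntiOn_cos ⟨hx0, by linarith [Real.pi_pos]⟩ ⟨le_of_lt hy0', by linarith [Real.pi_pos]⟩ hxy
  have hgx : 0 ≤ log ((1 + sin x) / cos x) := by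
    apply Real.log_nonneg
    rw [le_div_iff₀ hcx]
    have := Real.cos_le_one x; linarith
  have hgy : 0 < log ((1 + sin y) / cos y) := by
    apply Real.log_pos
    rw [lt_div_iff₀ hcy]
    have := Real.cos_le_one y; nlinarith
  have hgxy : log ((1 + sin x) / cos x) < log ((1 + sin y) / cos y) := by
    rw [Real.log_div (by linarith) hcx.ne', Real.log_div (by linarith) hcy.ne']
    have h1 : log (1 + sin x) < log (1 + sin y) := Real.log_lt_log (by linarith) (by linarith)
    have h2 : log (cos y) < log (cos x) := Real.log_lt_log hcy hcyx
    linarith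
  unfold phiEven
  nlinarith [mul_le_mul_of_nonneg_left (le_of_lt hgxy) hsx0,
    mul_lt_mul_of_pos_right hsxy hgy]

lemma phiEven_continuousOn {b : ℝ} (hb : b < π/2) :
    ContinuousOn phiEven (Icc 0 b) := by
  intro x hx
  have hc : 0 < cos x := Real.cos_pos_of_mem_Ioo ⟨by linarith [Real.pi_pos, hx.1], lt_of_le_of_lt hx.2 hb⟩
  have hne : (1 + sin x) / cos x ≠ 0 := by
    have : -1 ≤ sin x := Real.neg_one_le_sin x
    have : (0:ℝ) < (1 + sin x) / cos x := div_pos (by nlinarith [Real.sin_sq_add_cos_sq x]) hc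
    exact this.ne'
  have hca : ContinuousAt (fun x : ℝ => (1 + sin x) / cos x) x :=
    ContinuousAt.div (by fun_prop) (by fun_prop) hc.ne'
  have hlogc : ContinuousAt (fun y : ℝ => log ((1 + sin y) / cos y)) x :=
    hca.log hne
  have hca2 : ContinuousAt phiEven x := by
    unfold phiEven
    exact continuousAt_const.sub (Real.continuous_sin.continuousAt.mul hlogc)
  exact hca2.continuousWithinAt

/-- φ_even satisfies the alternative identity
φ_even(x) = 1 + sin x · log((1-sin x)/cos x) on (-π/2, π/2), is even in x,
is strictly decreasing on [0, π/2), and has a unique root x_root in (0, π/2). -/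
theorem phiEven_properties :
    (∀ x ∈ Ioo (-(π/2)) (π/2), phiEven x = 1 + sin x * log ((1 - sin x) / cos x)) ∧
    (∀ x ∈ Ioo (-(π/2)) (π/2), phiEven (-x) = phiEven x) ∧
    StrictAntiOn phiEven (Ico 0 (π/2)) ∧
    (∃! x, x ∈ Ioo 0 (π/2) ∧ phiEven x = 0) := by
  refine ⟨fun x hx => phiEven_alt hx, ?_, phiEven_anti, ?_⟩
  · intro x hx
    have hx' : -x ∈ Ioo (-(π/2)) (π/2) := by
      constructor <;> [linarith [hx.2]; linarith [hx.1]]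
    rw [phiEven_alt hx']
    unfold phiEven
    simp [Real.sin_neg, Real.cos_neg]
    ring
  · -- root
    set b := Real.arccos (Real.exp (-2)) with hbdef
    have he1 : Real.exp (-2) < 1 := Real.exp_lt_one_iff.mpr (by norm_num)
    have he0 : 0 < Real.exp (-2) := Real.exp_pos _
    have hb1 : 0 < b := Real.arccos_pos.mpr he1
    have hb2 : b < π/2 := Real.arccos_lt_pi_div_two.mpr he0
    have hcb : cos b = Real.exp (-2) := Real.cos_arccos (by linarith) (by linarith)
    have hsb : sin b = Real.sqrt (1 - Real.exp (-2) ^ 2) := Real.sin_arccos _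
    have he4 : Real.exp (-2) ^ 2 < 7/16 := by
      have h1 : (16:ℝ)/7 < Real.exp 4 := by nlinarith [Real.add_one_le_exp (4:ℝ)]
      have h2 : Real.exp (-2) ^ 2 = (Real.exp 4)⁻¹ := by
        rw [← Real.exp_nat_mul]
        · rw [← Real.exp_neg]; norm_num
      rw [h2]
      rw [inv_lt_iff_one_lt_mul₀ (by positivity)]
      nlinarith
    have hsb34 : 3/4 < sin b := by
      rw [hsb]
      have : (3/4:ℝ) = Real.sqrt ((3/4)^2) := by
        rw [Real.sqrt_sq]; norm_num
      rw [this]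
      apply Real.sqrt_lt_sqrt (by norm_num)
      nlinarith
    have hsb1 : sin b ≤ 1 := Real.sin_le_one b
    have hφb : phiEven b < 0 := by
      unfold phiEven
      have hlog : log ((1 + sin b) / cos b) = log (1 + sin b) + 2 := by
        rw [Real.log_div (by linarith) (by rw [hcb]; positivity), hcb, Real.log_exp]
        ring
      have hl0 : 0 ≤ log (1 + sin b) := Real.log_nonneg (by linarith)
      rw [hlog]
      nlinarith
    have hφ0 : phiEven 0 = 1 := by unfold phiEven; simp
    have hiv := intermediate_value_Ioo' (le_of_lt hb1) (phiEven_continuousOn hb2)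
    have h0mem : (0:ℝ) ∈ Ioo (phiEven b) (phiEven 0) := by
      rw [hφ0]; exact ⟨hφb, one_pos⟩
    obtain ⟨c, hc, hφc⟩ := hiv h0mem
    have hcmem : c ∈ Ioo 0 (π/2) := ⟨hc.1, lt_trans hc.2 hb2⟩
    refine ⟨c, ⟨hcmem, hφc⟩, ?_⟩
    rintro y ⟨hy, hφy⟩
    exact phiEven_anti.injOn ⟨le_of_lt hy.1, hy.2⟩ ⟨le_of_lt hcmem.1, hcmem.2⟩
      (by rw [hφy, hφc])
end

section
/- For each point p on the unit round two-sphere S², the function G_p := G ∘ d_p, where G(r) = 1 + cos r · (-1 + log(2 sin r/(1 + cos r))) and d_p is the geodesic distance from p, satisfies (Δ + 2) G_p = 0 on S² \ {p, -p}. -/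
open Real Set Filter Topology

/- With `x = cos r`, `G = (log 2 - 1) x - Q₁(x)`, where `Q₁(x) = (x/2) log ((1+x)/(1-x)) - 1` is the
Legendre function of the second kind of degree 1, so `G` solves the degree-1 Legendre equation,
which is the radial form of `(Δ + 2) u = 0`. Concretely, the logarithm is `log (2 tan (r/2))`,
whose derivative is `1 / sin r`, and the ODE reduces to `sin² r + cos² r = 1`. -/

noncomputable def Gfun (r : ℝ) : ℝ := 1 + cos r * (-1 + log (2 * sin r / (1 + cos r)))

lemma one_add_cos_ne_zero_of_sin_ne_zero {r : ℝ} (h : sin r ≠ 0) : 1 + cos r ≠ 0 := by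
  intro hcos
  apply h
  nlinarith [sin_sq_add_cos_sq r]

lemma hasDerivAt_log_two_sin_div_one_add_cos {r : ℝ} (h : sin r ≠ 0) :
    HasDerivAt (fun x => log (2 * sin x / (1 + cos x))) (sin r)⁻¹ r := by
  have hc := one_add_cos_ne_zero_of_sin_ne_zero h
  have hquot : HasDerivAt (fun x => 2 * sin x / (1 + cos x))
      ((2 * cos r * (1 + cos r) - 2 * sin r * -sin r) / (1 + cos r) ^ 2) r :=
    ((hasDerivAt_sin r).const_mul 2).div (by simpa using (hasDerivAt_cos r).const_add 1) hc
  convert hquot.log (by positivity) using 1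
  field_simp
  linear_combination -sin_sq_add_cos_sq r

noncomputable def Gfun' (r : ℝ) : ℝ :=
  sin r * (1 - log (2 * sin r / (1 + cos r))) + cos r / sin r

lemma hasDerivAt_Gfun {r : ℝ} (h : sin r ≠ 0) : HasDerivAt Gfun (Gfun' r) r := by
  have hG := ((hasDerivAt_cos r).mul
    ((hasDerivAt_log_two_sin_div_one_add_cos h).const_add (-1))).const_add 1
  unfold Gfun Gfun'
  refine hG.congr_deriv ?_
  field_simp
  ring

lemma hasDerivAt_Gfun' {r : ℝ} (h : sin r ≠ 0) :
    HasDerivAt Gfun'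
      (cos r * (1 - log (2 * sin r / (1 + cos r))) - 1 - 1 / sin r ^ 2) r := by
  have hG' := ((hasDerivAt_sin r).mul
    ((hasDerivAt_log_two_sin_div_one_add_cos h).const_sub 1)).add
      ((hasDerivAt_cos r).div (hasDerivAt_sin r) h)
  refine hG'.congr_deriv ?_
  field_simp
  linear_combination -sin_sq_add_cos_sq r

lemma deriv_Gfun_eventuallyEq {r : ℝ} (h : sin r ≠ 0) : deriv Gfun =ᶠ[𝓝 r] Gfun' := by
  filter_upwards [continuous_sin.continuousAt.eventually_ne h] with x hx
  exact (hasDerivAt_Gfun hx).deriv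

/-- On `S²`, `Δ (f ∘ d_p) = f''(r) + cot r · f'(r)` at distance `r ∈ (0, π)` from `p`, so
`(Δ + 2) G_p = 0` on `S² \ {p, -p}` is this radial ODE. -/
theorem Gfun_radial_linearized_equation :
    ∀ r ∈ Ioo (0:ℝ) π,
      deriv (deriv Gfun) r + (cos r / sin r) * deriv Gfun r + 2 * Gfun r = 0 := by
  intro r hr
  have hs : sin r ≠ 0 := (sin_pos_of_pos_of_lt_pi hr.1 hr.2).ne'
  rw [(deriv_Gfun_eventuallyEq hs).deriv_eq, (hasDerivAt_Gfun' hs).deriv,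
    (hasDerivAt_Gfun hs).deriv]
  unfold Gfun Gfun'
  field_simp
  linear_combination sin_sq_add_cos_sq r
end

section
/- Taking p_N to be the north pole of the equatorial two-sphere (so that the distance from p_N is π/2 - x where x is latitude), the Green's function G_{p_N} = G ∘ d_{p_N} decomposes as G_{p_N} = (log 2 - 1) φ_odd + φ_even, where φ_odd(x) = sin x and φ_even(x) = 1 - sin x · log((1+sin x)/cos x). -/
open Real Set

/-- φ_odd(x) = sin x. -/
noncomputable def phiOdd (x : ℝ) : ℝ := sin x

/-- With p_N the north pole, d_{p_N} = π/2 - x where x is latitude, and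
G_{p_N} = (log 2 - 1) φ_odd + φ_even. -/
theorem Green_north_pole_decomposition :
    ∀ x ∈ Ioo (-(π/2)) (π/2),
      Gfun (π/2 - x) = (log 2 - 1) * phiOdd x + phiEven x := by
  intro x hx
  obtain ⟨hx1, hx2⟩ := hx
  have hc : 0 < cos x := Real.cos_pos_of_mem_Ioo ⟨hx1, hx2⟩
  have hs : (0:ℝ) < 1 + sin x := by
    nlinarith [Real.sin_sq_add_cos_sq x, Real.sin_le_one x, Real.neg_one_le_sin x, mul_pos hc hc]
  have h2 : log (2 * cos x / (1 + sin x)) = log 2 + log (cos x) - log (1 + sin x) := by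
    rw [Real.log_div (by positivity) hs.ne', Real.log_mul (by norm_num) hc.ne']
  have h3 : log ((1 + sin x) / cos x) = log (1 + sin x) - log (cos x) :=
    Real.log_div hs.ne' hc.ne'
  simp only [Gfun, phiOdd, phiEven, Real.cos_pi_div_two_sub, Real.sin_pi_div_two_sub, h2, h3]
  ring
end

section
/- Fix x₁ ∈ (0, π/2) and m ∈ ℕ. Let j be the continuous function on (-π/2, π/2) with j(±x₁-side values) determined by: j(x₁) = 0, j solves φ'' - tan x φ' + 2φ = 0 separately on [x₁, π/2) and on [0, x₁], with one-sided derivatives at x₁ both equal to m in absolute value (derivative +m from the right, -m from the left). Then for m large enough, on |x - x₁| ≤ 3/m one has |j(x) - m·|x - x₁|| ≤ C/m and |j'(x) ∓ m| ≤ C (with sign according to the side), for an absolute constant C. -/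
/-!
On a window of width `3/m` around `x₁` the coefficient `tan x` stays bounded, so each one-sided
solution obeys `|u''| ≤ K max(|u|, |u'|)`. Grönwall's inequality for `(u, u')` then bounds
`max(|u|, |u'|)` by `m e^{3K}`, hence `|u''| = O(m)`, so over a window of width `3/m` the slope
moves by `O(1)` from `±m` and the function by `O(1/m)` from `m|x - x₁|`. The left-hand solution
is handled by reflecting it through `x ↦ -x`.
-/

open Real Set

theorem abs_tan_le_tan_of_abs_le {x c : ℝ} (hx : |x| ≤ c) (hc : c < π / 2) :
    |tan x| ≤ tan c := by
  have hmono := strictMonoOn_tan.monotoneOn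
  obtain ⟨hcx, hxc⟩ := abs_le.1 hx
  refine abs_le.2 ⟨?_, hmono ⟨by linarith, by linarith⟩ ⟨by linarith, hc⟩ hxc⟩
  rw [← tan_neg]
  exact hmono ⟨by linarith, by linarith⟩ ⟨by linarith, by linarith⟩ hcx

def SecondOrderBound (K : ℝ) (u u' u'' : ℝ → ℝ) (s : Set ℝ) : Prop :=
  ∀ x ∈ s, HasDerivAt u (u' x) x ∧ HasDerivAt u' (u'' x) x ∧ |u'' x| ≤ K * max |u x| |u' x|

namespace SecondOrderBound

variable {K : ℝ} {u u' u'' : ℝ → ℝ} {s : Set ℝ}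

theorem of_linear_ode {p q : ℝ → ℝ} {A B : ℝ} (hp : ∀ x ∈ s, |p x| ≤ A)
    (hq : ∀ x ∈ s, |q x| ≤ B)
    (h : ∀ x ∈ s, HasDerivAt u (u' x) x ∧ HasDerivAt u' (u'' x) x ∧
      u'' x = p x * u' x + q x * u x) :
    SecondOrderBound (A + B) u u' u'' s := by
  intro x hx
  obtain ⟨hu, hu', hode⟩ := h x hx
  refine ⟨hu, hu', ?_⟩
  calc |u'' x| ≤ |p x| * |u' x| + |q x| * |u x| := by
        rw [hode, ← abs_mul, ← abs_mul]; exact abs_add_le _ _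
    _ ≤ A * max |u x| |u' x| + B * max |u x| |u' x| :=
        add_le_add
          (mul_le_mul (hp x hx) (le_max_right _ _) (abs_nonneg _) ((abs_nonneg _).trans (hp x hx)))
          (mul_le_mul (hq x hx) (le_max_left _ _) (abs_nonneg _) ((abs_nonneg _).trans (hq x hx)))
    _ = (A + B) * max |u x| |u' x| := by ring

theorem comp_neg (h : SecondOrderBound K u u' u'' s) :
    SecondOrderBound K (fun t => u (-t)) (fun t => -u' (-t)) (fun t => u'' (-t)) (-s) := by
  intro t ht
  obtain ⟨hu, hu', hbound⟩ := h (-t) ht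
  refine ⟨?_, ?_, by simpa only [abs_neg] using hbound⟩
  · exact (hu.comp t (hasDerivAt_neg t)).congr_deriv (by ring)
  · exact (hu'.comp t (hasDerivAt_neg t)).neg.congr_deriv (by ring)

theorem of_tan_ode {c : ℝ} (hc : c < π / 2) (hs : s ⊆ Icc (-c) c)
    (h : ∀ x ∈ s, HasDerivAt u (u' x) x ∧ HasDerivAt u' (u'' x) x ∧
      u'' x - tan x * u' x + 2 * u x = 0) :
    SecondOrderBound (tan c + 2) u u' u'' s :=
  of_linear_ode (p := tan) (q := fun _ => -2)
    (fun x hx => abs_tan_le_tan_of_abs_le (abs_le.2 (hs hx)) hc) (fun _ _ => by norm_num)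
    (fun x hx => ⟨(h x hx).1, (h x hx).2.1, by linarith [(h x hx).2.2]⟩)

variable {a b : ℝ}

theorem max_abs_le_exp (hK : 1 ≤ K) (h : SecondOrderBound K u u' u'' (Icc a b)) :
    ∀ x ∈ Icc a b, max |u x| |u' x| ≤ max |u a| |u' a| * exp (K * (x - a)) := by
  have hderiv : ∀ x ∈ Icc a b, HasDerivAt (fun y => (u y, u' y)) (u' x, u'' x) x :=
    fun x hx => (h x hx).1.prodMk (h x hx).2.1
  have hgrowth : ∀ x ∈ Ico a b, ‖(u' x, u'' x)‖ ≤ K * ‖(u x, u' x)‖ + 0 := by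
    intro x hx
    simp only [Prod.norm_def, Real.norm_eq_abs, add_zero]
    exact max_le ((le_max_right _ _).trans (le_mul_of_one_le_left (by positivity) hK))
      (h x (Ico_subset_Icc_self hx)).2.2
  intro x hx
  simpa [Prod.norm_def, gronwallBound_ε0] using
    norm_le_gronwallBound_of_norm_deriv_right_le
      (fun y hy => (hderiv y hy).continuousAt.continuousWithinAt)
      (fun y hy => (hderiv y (Ico_subset_Icc_self hy)).hasDerivWithinAt) le_rfl hgrowth x hx

theorem abs_deriv_sub_le (hK : 1 ≤ K) (h : SecondOrderBound K u u' u'' (Icc a b)) :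
    ∀ x ∈ Icc a b, |u' x - u' a| ≤ K * max |u a| |u' a| * exp (K * (b - a)) * (x - a) := by
  have hsecond : ∀ x ∈ Icc a b, ‖u'' x‖ ≤ K * max |u a| |u' a| * exp (K * (b - a)) := by
    intro x hx
    calc ‖u'' x‖ ≤ K * max |u x| |u' x| := (h x hx).2.2
      _ ≤ K * (max |u a| |u' a| * exp (K * (b - a))) := by
          gcongr
          refine (max_abs_le_exp hK h x hx).trans ?_
          gcongr
          exact hx.2
      _ = K * max |u a| |u' a| * exp (K * (b - a)) := by ring
  intro x hx
  have := (convex_Icc a b).norm_image_sub_le_of_norm_hasDerivWithin_le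
    (fun y hy => (h y hy).2.1.hasDerivWithinAt) hsecond (left_mem_Icc.2 (hx.1.trans hx.2)) hx
  rwa [Real.norm_eq_abs, Real.norm_eq_abs, abs_of_nonneg (sub_nonneg.2 hx.1)] at this

theorem abs_sub_taylor_le (hK : 1 ≤ K) (h : SecondOrderBound K u u' u'' (Icc a b)) :
    ∀ x ∈ Icc a b, |u x - u a - u' a * (x - a)| ≤
      K * max |u a| |u' a| * exp (K * (b - a)) * (b - a) * (x - a) := by
  have hderiv : ∀ y ∈ Icc a b,
      HasDerivWithinAt (fun y => u y - u a - u' a * (y - a)) (u' y - u' a) (Icc a b) y := by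
    intro y hy
    exact (((h y hy).1.sub_const (u a)).sub
      (((hasDerivAt_id y).sub_const a).const_mul (u' a))).hasDerivWithinAt.congr_deriv (by simp)
  have hslope : ∀ y ∈ Icc a b,
      ‖u' y - u' a‖ ≤ K * max |u a| |u' a| * exp (K * (b - a)) * (b - a) := by
    intro y hy
    refine (abs_deriv_sub_le hK h y hy).trans ?_
    have : 0 ≤ K * max |u a| |u' a| * exp (K * (b - a)) := by positivity
    gcongr
    exact hy.2
  intro x hx
  have := (convex_Icc a b).norm_image_sub_le_of_norm_hasDerivWithin_le hderiv hslope
    (left_mem_Icc.2 (hx.1.trans hx.2)) hx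
  simpa [Real.norm_eq_abs, abs_of_nonneg (sub_nonneg.2 hx.1)] using this

theorem corner_estimate (hK : 1 ≤ K) {m t₀ : ℝ} (hm : 1 ≤ m)
    (h : SecondOrderBound K u u' u'' (Icc t₀ (t₀ + 3 / m))) (h0 : u t₀ = 0) (h0' : u' t₀ = m) :
    ∀ x ∈ Icc t₀ (t₀ + 3 / m),
      |u x - m * (x - t₀)| ≤ 9 * K * exp (3 * K) / m ∧ |u' x - m| ≤ 9 * K * exp (3 * K) := by
  intro x hx
  have hm0 : 0 < m := by linarith
  have hmax : max |u t₀| |u' t₀| = m := by simp [h0, h0', hm0.le]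
  have hwidth : t₀ + 3 / m - t₀ = 3 / m := by ring
  have hexp : exp (K * (3 / m)) ≤ exp (3 * K) := by
    have : 3 / m ≤ 3 := div_le_self zero_le_three hm
    exact exp_le_exp.2 (by rw [mul_comm 3 K]; gcongr)
  have hx₀ : 0 ≤ x - t₀ := sub_nonneg.2 hx.1
  have hx₁ : x - t₀ ≤ 3 / m := by linarith [hx.2]
  have hderiv := abs_deriv_sub_le hK h x hx
  have htaylor := abs_sub_taylor_le hK h x hx
  rw [hmax, hwidth, h0'] at hderiv htaylor
  rw [h0, sub_zero] at htaylor
  constructor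
  · calc |u x - m * (x - t₀)| ≤ K * m * exp (K * (3 / m)) * (3 / m) * (x - t₀) := htaylor
      _ ≤ K * m * exp (3 * K) * (3 / m) * (3 / m) := by gcongr
      _ = 9 * K * exp (3 * K) / m := by field_simp; ring
  · calc |u' x - m| ≤ K * m * exp (K * (3 / m)) * (x - t₀) := hderiv
      _ ≤ K * m * exp (3 * K) * (3 / m) := by gcongr
      _ = 3 * K * exp (3 * K) := by field_simp
      _ ≤ 9 * K * exp (3 * K) := by nlinarith [exp_pos (3 * K)]

theorem corner_estimate_left (hK : 1 ≤ K) {m t₀ : ℝ} (hm : 1 ≤ m)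
    (h : SecondOrderBound K u u' u'' (Icc (t₀ - 3 / m) t₀)) (h0 : u t₀ = 0) (h0' : u' t₀ = -m) :
    ∀ x ∈ Icc (t₀ - 3 / m) t₀,
      |u x - m * (t₀ - x)| ≤ 9 * K * exp (3 * K) / m ∧ |u' x + m| ≤ 9 * K * exp (3 * K) := by
  have hreflected := h.comp_neg
  rw [neg_Icc, show -(t₀ - 3 / m) = -t₀ + 3 / m by ring] at hreflected
  intro x hx
  have hx' : -x ∈ Icc (-t₀) (-t₀ + 3 / m) := ⟨neg_le_neg hx.2, by linarith [hx.1]⟩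
  obtain ⟨hvalue, hslope⟩ :=
    hreflected.corner_estimate hK hm (by simpa using h0) (by simp [h0']) (-x) hx'
  rw [neg_neg, show m * (-x - -t₀) = m * (t₀ - x) by ring] at hvalue
  rw [neg_neg, ← neg_add', abs_neg] at hslope
  exact ⟨hvalue, hslope⟩

end SecondOrderBound

/-- Fix a compact subinterval [a,b] ⊂ (0, π/2).  Let j be continuous with j(x₁) = 0,
solving φ'' - tan x φ' + 2φ = 0 separately on each side of x₁ (given by one-sided
solutions j₊, j₋) with one-sided derivatives +m from the right and -m from the left.
Then for m large enough, on |x - x₁| ≤ 3/m one has |j(x) - m|x - x₁|| ≤ C/m and the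
one-sided derivatives differ from ±m by at most C, with C uniform. -/
theorem ode_corner_solution_estimate (a b : ℝ) (ha : 0 < a) (hb : b < π/2) (hab : a ≤ b) :
    ∃ C > 0, ∃ N : ℕ, ∀ m : ℕ, N ≤ m → ∀ x₁ ∈ Icc a b,
      ∀ j jp jp' jp'' jm jm' jm'' : ℝ → ℝ,
        (∀ x ∈ Icc x₁ (x₁ + 3/(m:ℝ)),
            HasDerivAt jp (jp' x) x ∧ HasDerivAt jp' (jp'' x) x ∧
            jp'' x - tan x * jp' x + 2 * jp x = 0) →
        (∀ x ∈ Icc (x₁ - 3/(m:ℝ)) x₁,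
            HasDerivAt jm (jm' x) x ∧ HasDerivAt jm' (jm'' x) x ∧
            jm'' x - tan x * jm' x + 2 * jm x = 0) →
        jp x₁ = 0 → jp' x₁ = (m:ℝ) →
        jm x₁ = 0 → jm' x₁ = -(m:ℝ) →
        (∀ x ∈ Icc x₁ (x₁ + 3/(m:ℝ)), j x = jp x) →
        (∀ x ∈ Icc (x₁ - 3/(m:ℝ)) x₁, j x = jm x) →
        ∀ x ∈ Icc (x₁ - 3/(m:ℝ)) (x₁ + 3/(m:ℝ)),
          abs (j x - (m:ℝ) * |x - x₁|) ≤ C / (m:ℝ) ∧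
          (x₁ ≤ x → |jp' x - (m:ℝ)| ≤ C) ∧
          (x ≤ x₁ → |jm' x + (m:ℝ)| ≤ C) := by
  obtain ⟨c, hbc, hcπ⟩ := exists_between hb
  set K := tan c + 2
  have hK : 1 ≤ K := by linarith [tan_nonneg_of_nonneg_of_le_pi_div_two (by linarith) hcπ.le]
  have hρ : 0 < min a (c - b) := lt_min ha (by linarith)
  obtain ⟨N, hN⟩ := exists_nat_gt (3 / min a (c - b))
  refine ⟨9 * K * exp (3 * K), by positivity, N, ?_⟩
  intro m hm x₁ hx₁ j jp jp' jp'' jm jm' jm'' hjp hjm hjp₀ hjp₀' hjm₀ hjm₀' hj_right hj_left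
  have hmN : 3 / min a (c - b) < m := hN.trans_le (by exact_mod_cast hm)
  have hm₀ : (0 : ℝ) < m := (div_pos three_pos hρ).trans hmN
  have hm₁ : (1 : ℝ) ≤ m := Nat.one_le_cast.2 (by exact_mod_cast hm₀)
  have hwidth : 3 / (m : ℝ) ≤ min a (c - b) := ((div_lt_comm₀ hρ hm₀).1 hmN).le
  have hwindow : Icc (x₁ - 3 / m) (x₁ + 3 / m) ⊆ Icc (-c) c :=
    Icc_subset_Icc (by linarith [min_le_left a (c - b), hx₁.1])
      (by linarith [min_le_right a (c - b), hx₁.2])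
  have est_right :=
    (SecondOrderBound.of_tan_ode hcπ
      ((Icc_subset_Icc (sub_le_self _ (by positivity)) le_rfl).trans hwindow) hjp).corner_estimate
      hK hm₁ hjp₀ hjp₀'
  have est_left :=
    (SecondOrderBound.of_tan_ode hcπ
      ((Icc_subset_Icc le_rfl (le_add_of_nonneg_right (by positivity))).trans hwindow)
      hjm).corner_estimate_left hK hm₁ hjm₀ hjm₀'
  intro x hx
  refine ⟨?_, fun hx' => (est_right x ⟨hx', hx.2⟩).2, fun hx' => (est_left x ⟨hx.1, hx'⟩).2⟩
  rcases le_total x₁ x with hx' | hx'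
  · rw [hj_right x ⟨hx', hx.2⟩, abs_of_nonneg (sub_nonneg.2 hx')]
    exact (est_right x ⟨hx', hx.2⟩).1
  · rw [hj_left x ⟨hx.1, hx'⟩, abs_sub_comm x x₁, abs_of_nonneg (sub_nonneg.2 hx')]
    exact (est_left x ⟨hx.1, hx'⟩).1
end
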